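/- arXiv:1406.0450 — 2 statements merged into one kernel-verified Lean document; each statement's English description precedes it below -/
import Mathlib

section
/- Let m ≥ 2 be an integer and define the sequence L by L(2) = 2m+1 and the recursive bound: for i ≥ 2, L(i+1) ≤ m^(L(i)) · (L(i)+1) + L(i). Then for all i ≥ 2, L(i) < m↑↑(2i−1), where ↑↑ denotes tetration (x↑↑1 = x, x↑↑(n+1) = x^(x↑↑n)). -/
def tet (x : ℕ) : ℕ → ℕ
  | 0 => 1
  | n + 1 => x ^ tet x n

/-! Write `T = m↑↑(2i-1)`. If `L i < T`, then `L (i+1) ≤ m^L (L+1) + L < m^(2L+1) ≤ m^(m^T)`,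
using only `a < 2^a`, and `m^(m^T) = m↑↑(2i+1)`. The base case is the same estimate
read at `1 < m = m↑↑1`, since `m^1 (1+1) + 1 = 2m+1`. -/

lemma tet_one (x : ℕ) : tet x 1 = x := pow_one x

lemma tet_add_two (x n : ℕ) : tet x (n + 2) = x ^ x ^ tet x n := rfl

lemma two_mul_add_two_le_two_pow_succ (a : ℕ) : 2 * a + 2 ≤ 2 ^ (a + 1) := by
  have := Nat.lt_two_pow_self (n := a)
  rw [pow_succ]
  omega

lemma pow_mul_succ_add_lt_pow_pow {m a b : ℕ} (hm : 2 ≤ m) (hab : a < b) :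
    m ^ a * (a + 1) + a < m ^ m ^ b := by
  have ha : a < m ^ a := Nat.lt_pow_self hm
  have hsucc : 2 * a + 2 ≤ m ^ (a + 1) :=
    (two_mul_add_two_le_two_pow_succ a).trans (Nat.pow_le_pow_left hm _)
  have hb : m ^ (a + 1) ≤ m ^ b := Nat.pow_le_pow_right (by omega) hab
  calc m ^ a * (a + 1) + a < m ^ a * (a + 2) := by nlinarith
    _ ≤ m ^ a * m ^ (a + 1) := by gcongr; omega
    _ = m ^ (2 * a + 1) := by ring
    _ ≤ m ^ m ^ b := Nat.pow_le_pow_right (by omega) (by omega)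

theorem stmt_2 (m : ℕ) (hm : 2 ≤ m) (L : ℕ → ℕ)
    (hL2 : L 2 = 2 * m + 1)
    (hrec : ∀ i : ℕ, 2 ≤ i → L (i + 1) ≤ m ^ (L i) * (L i + 1) + L i) :
    ∀ i : ℕ, 2 ≤ i → L i < tet m (2 * i - 1) := by
  intro i hi
  induction i, hi using Nat.le_induction with
  | base =>
    rw [show 2 * 2 - 1 = 1 + 2 from rfl, tet_add_two, tet_one]
    calc L 2 = m ^ 1 * (1 + 1) + 1 := by rw [hL2]; ring
      _ < m ^ m ^ m := pow_mul_succ_add_lt_pow_pow hm hm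
  | succ n hn ih =>
    rw [show 2 * (n + 1) - 1 = 2 * n - 1 + 2 by omega, tet_add_two]
    exact (hrec n hn).trans_lt (pow_mul_succ_add_lt_pow_pow hm ih)
end

section
/- For integers m ≥ 2 and j ≥ 2 and real u > 0, one has −log(m+u) < −(1/j)·log(m(1+u)^j − (m−1)u^j). -/
/-
Write `A_j = M(1+u)^j - (M-1)u^j = M((1+u)^j - u^j) + u^j > 0`. Then `A_{j+1} = (1+u)A_j + (M-1)u^j`
while `(M+u)^{j+1} = (1+u)(M+u)^j + (M-1)(M+u)^j`, so from `A_2 = M + 2Mu + u^2 < (M+u)^2` (as `M > 1`)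
induction gives `A_j < (M+u)^j` for `j ≥ 2`; take logarithms and divide by `-j`.
-/

lemma mul_one_add_pow_sub_mul_pow_pos {M u : ℝ} (hM : 0 ≤ M) (hu : 0 < u) (j : ℕ) :
    0 < M * (1 + u) ^ j - (M - 1) * u ^ j := by
  have hpow : u ^ j ≤ (1 + u) ^ j := pow_le_pow_left₀ hu.le (by linarith) j
  nlinarith [mul_le_mul_of_nonneg_left hpow hM, pow_pos hu j]

lemma mul_one_add_pow_sub_mul_pow_lt_add_pow {M u : ℝ} (hM : 1 < M) (hu : 0 ≤ u) {j : ℕ}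
    (hj : 2 ≤ j) : M * (1 + u) ^ j - (M - 1) * u ^ j < (M + u) ^ j := by
  induction j, hj using Nat.le_induction with
  | base => nlinarith
  | succ n _ ih =>
    have hpow : u ^ n ≤ (M + u) ^ n := pow_le_pow_left₀ hu (by linarith) n
    calc M * (1 + u) ^ (n + 1) - (M - 1) * u ^ (n + 1)
        = (1 + u) * (M * (1 + u) ^ n - (M - 1) * u ^ n) + (M - 1) * u ^ n := by ring
      _ < (1 + u) * (M + u) ^ n + (M - 1) * (M + u) ^ n := by
        gcongr
        · linarith
      _ = (M + u) ^ (n + 1) := by ring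

lemma neg_log_lt_neg_inv_mul_log_of_lt_pow {a b : ℝ} {j : ℕ} (hj : 0 < j) (ha : 0 < a)
    (hab : a < b ^ j) : -Real.log b < -(1 / j) * Real.log a := by
  have hlog : Real.log a < j * Real.log b := by
    simpa only [Real.log_pow] using Real.log_lt_log ha hab
  have hj' : (0 : ℝ) < j := by exact_mod_cast hj
  rw [neg_mul, neg_lt_neg_iff, one_div, inv_mul_lt_iff₀ hj']
  exact hlog

theorem stmt_17 (m j : ℕ) (hm : 2 ≤ m) (hj : 2 ≤ j) (u : ℝ) (hu : 0 < u) :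
    -Real.log (m + u) <
      -(1 / j) * Real.log (m * (1 + u) ^ j - (m - 1) * u ^ j) := by
  have hM : (1 : ℝ) < m := by exact_mod_cast hm
  exact neg_log_lt_neg_inv_mul_log_of_lt_pow (by omega)
    (mul_one_add_pow_sub_mul_pow_pos (by positivity) hu j)
    (mul_one_add_pow_sub_mul_pow_lt_add_pow hM hu.le hj)
end
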